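/- arXiv:1402.6721 — 3 statements merged into one kernel-verified Lean document; each statement's English description precedes it below -/
import Mathlib

section
/- Let τ : ℝ → ℝ be differentiable at θ₀, and let x₋, x₊ : ℝ × ℝ → ℝ be differentiable at (θ₀, τ(θ₀)). Suppose the continuity (matching) condition x₋(θ, τ(θ)) = x₊(θ, τ(θ)) holds for all θ in some neighborhood of θ₀. Then the parameter-sensitivities satisfy the boundary (jump) condition ∂x₊/∂θ(θ₀, τ(θ₀)) = ∂x₋/∂θ(θ₀, τ(θ₀)) + [ ∂x₋/∂t(θ₀, τ(θ₀)) − ∂x₊/∂t(θ₀, τ(θ₀)) ] · τ′(θ₀). -/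
/-! Both sides of the matching condition are the same function of `θ` near `θ₀`, so their
derivatives along the graph `θ ↦ (θ, τ θ)` agree. By the chain rule each of these derivatives is
`∂_θ x + τ' · ∂_t x`, and equating the two expressions gives the jump condition. -/

section PartialDerivatives

variable {𝕜 F : Type*} [NontriviallyNormedField 𝕜] [NormedAddCommGroup F] [NormedSpace 𝕜 F]
  {f : 𝕜 × 𝕜 → F} {f' : 𝕜 × 𝕜 →L[𝕜] F}

theorem HasFDerivAt.hasDerivAt_partial_fst {a b : 𝕜} (hf : HasFDerivAt f f' (a, b)) :
    HasDerivAt (fun x => f (x, b)) (f' (1, 0)) a :=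
  hf.comp_hasDerivAt a ((hasDerivAt_id a).prodMk (hasDerivAt_const a b))

theorem HasFDerivAt.hasDerivAt_partial_snd {a b : 𝕜} (hf : HasFDerivAt f f' (a, b)) :
    HasDerivAt (fun y => f (a, y)) (f' (0, 1)) b :=
  hf.comp_hasDerivAt b ((hasDerivAt_const b a).prodMk (hasDerivAt_id b))

theorem DifferentiableAt.hasDerivAt_comp_graph {τ : 𝕜 → 𝕜} {a : 𝕜}
    (hf : DifferentiableAt 𝕜 f (a, τ a)) (hτ : DifferentiableAt 𝕜 τ a) :
    HasDerivAt (fun x => f (x, τ x))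
      (deriv (fun x => f (x, τ a)) a + deriv τ a • deriv (fun y => f (a, y)) (τ a)) a := by
  have hgraph := hf.hasFDerivAt.comp_hasDerivAt a ((hasDerivAt_id a).prodMk hτ.hasDerivAt)
  have hdir : ((1 : 𝕜), deriv τ a) = ((1 : 𝕜), (0 : 𝕜)) + deriv τ a • ((0 : 𝕜), (1 : 𝕜)) := by
    simp
  rw [hdir, map_add, map_smul] at hgraph
  rwa [hf.hasFDerivAt.hasDerivAt_partial_fst.deriv, hf.hasFDerivAt.hasDerivAt_partial_snd.deriv]

end PartialDerivatives

/-- Boundary (jump) condition (eq. (9)) for the parameter sensitivity at an event time: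
if the state is continuous across the event, i.e. `xm (θ, τ θ) = xp (θ, τ θ)` near `θ₀`,
then `xp' (τ⁺) = xm' (τ⁻) + [f_{k-1}(τ⁻) − f_k(τ⁺)] · τ'`. -/
theorem stmt_1
    (τ : ℝ → ℝ) (xm xp : ℝ × ℝ → ℝ) (θ₀ : ℝ)
    (hτ : DifferentiableAt ℝ τ θ₀)
    (hm : DifferentiableAt ℝ xm (θ₀, τ θ₀))
    (hp : DifferentiableAt ℝ xp (θ₀, τ θ₀))
    (hmatch : ∀ᶠ θ in nhds θ₀, xm (θ, τ θ) = xp (θ, τ θ)) :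
    deriv (fun θ => xp (θ, τ θ₀)) θ₀ =
      deriv (fun θ => xm (θ, τ θ₀)) θ₀ +
        (deriv (fun t => xm (θ₀, t)) (τ θ₀) - deriv (fun t => xp (θ₀, t)) (τ θ₀)) *
          deriv τ θ₀ := by
  have hgraph_eq := ((hp.hasDerivAt_comp_graph hτ).congr_of_eventuallyEq hmatch).unique
    (hm.hasDerivAt_comp_graph hτ)
  rw [smul_eq_mul, smul_eq_mul] at hgraph_eq
  linear_combination hgraph_eq
end

section
/- (Sensitivity update at an R2G event occurring during a nonempty period.) Let σ : ℝ → ℝ be differentiable at s₀, and let x₋, x₊ : ℝ × ℝ → ℝ be differentiable at (s₀, σ(s₀)) with x₋(s, σ(s)) = x₊(s, σ(s)) for all s in a neighborhood of s₀. Suppose there are reals α and h such that (∂x₋/∂t)(s₀, σ(s₀)) = α and (∂x₊/∂t)(s₀, σ(s₀)) = α − h. Then (∂x₊/∂s)(s₀, σ(s₀)) = (∂x₋/∂s)(s₀, σ(s₀)) + h · σ′(s₀). -/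
/-! Differentiate both sides of `xm (s, σ s) = xp (s, σ s)` in `s`. By the chain rule the total
derivative of either side along the switching curve is `∂ₛx + ∂ₜx · σ'`, so equating them, the
difference `∂ₜxm − ∂ₜxp = h` of the time derivatives is exactly what the `s`-sensitivity jumps by,
scaled by `σ'`. -/

theorem deriv_comp_prodMk_eq_add {𝕜 F : Type*} [NontriviallyNormedField 𝕜]
    [NormedAddCommGroup F] [NormedSpace 𝕜 F] {f : 𝕜 × 𝕜 → F} {σ : 𝕜 → 𝕜} {s : 𝕜}
    (hσ : DifferentiableAt 𝕜 σ s) (hf : DifferentiableAt 𝕜 f (s, σ s)) :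
    deriv (fun u => f (u, σ u)) s =
      deriv (fun u => f (u, σ s)) s + deriv σ s • deriv (fun t => f (s, t)) (σ s) := by
  have hgraph : HasDerivAt (fun u => f (u, σ u)) _ s :=
    hf.hasFDerivAt.comp_hasDerivAt s ((hasDerivAt_id s).prodMk hσ.hasDerivAt)
  have hfirst : HasDerivAt (fun u => f (u, σ s)) _ s :=
    hf.hasFDerivAt.comp_hasDerivAt s ((hasDerivAt_id s).prodMk (hasDerivAt_const s (σ s)))
  have hsecond : HasDerivAt (fun t => f (s, t)) _ (σ s) :=
    hf.hasFDerivAt.comp_hasDerivAt (σ s)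
      ((hasDerivAt_const (σ s) s).prodMk (hasDerivAt_id (σ s)))
  rw [hgraph.deriv, hfirst.deriv, hsecond.deriv, ← map_smul, ← map_add]
  congr 1
  simp

/-- Sensitivity update at an `R2G` event during a nonempty period (second case of eq. (16)):
if the state is continuous across the switch, `∂xm/∂t = α` and `∂xp/∂t = α − h` at the
switching point, then `xp'(σ⁺) = xm'(σ⁻) + h · σ'`. -/
theorem stmt_6
    (σ : ℝ → ℝ) (xm xp : ℝ × ℝ → ℝ) (s₀ α h : ℝ)
    (hσ : DifferentiableAt ℝ σ s₀)
    (hm : DifferentiableAt ℝ xm (s₀, σ s₀))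
    (hp : DifferentiableAt ℝ xp (s₀, σ s₀))
    (hmatch : ∀ᶠ s in nhds s₀, xm (s, σ s) = xp (s, σ s))
    (htm : deriv (fun t => xm (s₀, t)) (σ s₀) = α)
    (htp : deriv (fun t => xp (s₀, t)) (σ s₀) = α - h) :
    deriv (fun s => xp (s, σ s₀)) s₀ =
      deriv (fun s => xm (s, σ s₀)) s₀ + h * deriv σ s₀ := by
  have htotal : deriv (fun s => xm (s, σ s)) s₀ = deriv (fun s => xp (s, σ s)) s₀ :=
    Filter.EventuallyEq.deriv_eq hmatch
  rw [deriv_comp_prodMk_eq_add hσ hm, deriv_comp_prodMk_eq_add hσ hp, htm, htp,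
    smul_eq_mul, smul_eq_mul] at htotal
  linarith
end

section
/- (IPA estimator for the cost derivative over a nonempty period, equation (19).) Let ξ, η : ℝ → ℝ be differentiable at s₀ with ξ(s₀) < η(s₀), and let x : ℝ × ℝ → ℝ be continuously differentiable on an open set containing {s₀} × [ξ(s₀), η(s₀)], with x(s, ξ(s)) = 0 and x(s, η(s)) = 0 for all s in a neighborhood of s₀. Suppose there is a partition ξ(s₀) = t⁰ < t¹ < ⋯ < t^{J} < t^{J+1} = η(s₀) and reals v₀, v₁, …, v_J such that (∂x/∂s)(s₀, t) = v_j for all t ∈ [t^j, t^{j+1}), j = 0, …, J. Then L(s) = ∫_{ξ(s)}^{η(s)} x(s, t) dt is differentiable at s₀ and L′(s₀) = Σ_{j=0}^{J} v_j · (t^{j+1} − t^j). -/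
open intervalIntegral MeasureTheory
open Set Filter Topology Asymptotics Metric
open scoped Interval

/-!
Near `s₀`,
`L s = ∫_{ξ s₀}^{η s₀} x (s, u) du - ∫_{ξ s₀}^{ξ s} x (s, u) du + ∫_{η s₀}^{η s} x (s, u) du`.
The first term is differentiated under the integral sign. For an endpoint `φ = ξ, η`, `x (s, ·)`
vanishes at `φ s` and is Lipschitz near `(s₀, φ s₀)`, so it is `O(|φ s - φ s₀|)` between `φ s₀`
and `φ s`; the endpoint term is then `O(|φ s - φ s₀|²) = o(s - s₀)` and contributes nothing to the
derivative. The sensitivity being piecewise constant, its integral over `[ξ s₀, η s₀]` is the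
sum in (19).
-/

variable {E : Type*} [NormedAddCommGroup E] [NormedSpace ℝ E]

theorem eventually_uIcc_subset {φ : ℝ → ℝ} {s₀ : ℝ} (hφ : ContinuousAt φ s₀) {W : Set ℝ}
    (hW : W ∈ 𝓝 (φ s₀)) : ∀ᶠ s in 𝓝 s₀, [[φ s₀, φ s]] ⊆ W :=
  (tendsto_const_nhds.uIcc hφ).eventually (eventually_smallSets_subset.2 hW)

theorem DifferentiableAt.hasDerivAt_fst_slice {x : ℝ × ℝ → E} {s u : ℝ}
    (h : DifferentiableAt ℝ x (s, u)) :
    HasDerivAt (fun s' => x (s', u)) (fderiv ℝ x (s, u) (1, 0)) s :=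
  h.hasFDerivAt.comp_hasDerivAt s ((hasDerivAt_id s).prodMk (hasDerivAt_const s u))

theorem hasDerivAt_intervalIntegral_of_contDiffOn {x : ℝ × ℝ → E} {V : Set (ℝ × ℝ)}
    {s₀ a b : ℝ} (hV : IsOpen V) (hsub : {s₀} ×ˢ [[a, b]] ⊆ V) (hx : ContDiffOn ℝ 1 x V) :
    HasDerivAt (fun s => ∫ u in a..b, x (s, u))
      (∫ u in a..b, deriv (fun s => x (s, u)) s₀) s₀ := by
  obtain ⟨U, W, hU, -, hs₀U, habW, hUW⟩ :=
    generalized_tube_lemma isCompact_singleton isCompact_uIcc hV hsub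
  obtain ⟨ρ, hρ, hρU⟩ := nhds_basis_closedBall.mem_iff.1 (hU.mem_nhds (hs₀U rfl))
  have hK : closedBall s₀ ρ ×ˢ [[a, b]] ⊆ V := (prod_mono hρU habW).trans hUW
  have hdiff : ∀ p ∈ V, DifferentiableAt ℝ x p := fun p hp =>
    (hx.differentiableOn one_ne_zero p hp).differentiableAt (hV.mem_nhds hp)
  have hfderiv : ContinuousOn (fderiv ℝ x) V := hx.continuousOn_fderiv_of_isOpen hV le_rfl
  obtain ⟨M, hM⟩ := ((isCompact_closedBall s₀ ρ).prod isCompact_uIcc).exists_bound_of_continuousOn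
    (hfderiv.mono hK)
  have hslice : ∀ s ∈ closedBall s₀ ρ, ContinuousOn (fun u => x (s, u)) [[a, b]] :=
    fun s hs => hx.continuousOn.comp (Continuous.prodMk_right s).continuousOn
      fun u hu => hK ⟨hs, hu⟩
  have hpartial : ContinuousOn (fun u => fderiv ℝ x (s₀, u) (1, 0)) [[a, b]] :=
    (hfderiv.comp (Continuous.prodMk_right s₀).continuousOn
      fun u hu => hK ⟨mem_closedBall_self hρ.le, hu⟩).clm_apply continuousOn_const
  have hball : closedBall s₀ ρ ∈ 𝓝 s₀ := closedBall_mem_nhds s₀ hρ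
  obtain ⟨-, hderiv⟩ := hasDerivAt_integral_of_dominated_loc_of_deriv_le
    (F' := fun s u => fderiv ℝ x (s, u) (1, 0)) (bound := fun _ => M * ‖((1 : ℝ), (0 : ℝ))‖)
    hball
    (eventually_of_mem hball fun s hs =>
      ((hslice s hs).mono uIoc_subset_uIcc).aestronglyMeasurable measurableSet_uIoc)
    ((hslice s₀ (mem_closedBall_self hρ.le)).intervalIntegrable)
    ((hpartial.mono uIoc_subset_uIcc).aestronglyMeasurable measurableSet_uIoc)
    (.of_forall fun u hu s hs =>
      ContinuousLinearMap.le_of_opNorm_le _ (hM _ ⟨hs, uIoc_subset_uIcc hu⟩) _)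
    (intervalIntegrable_const (μ := volume))
    (.of_forall fun u hu s hs => (hdiff _ (hK ⟨hs, uIoc_subset_uIcc hu⟩)).hasDerivAt_fst_slice)
  refine hderiv.congr_deriv (integral_congr fun u hu => ?_)
  exact ((hdiff _ (hK ⟨mem_closedBall_self hρ.le, hu⟩)).hasDerivAt_fst_slice).deriv.symm

theorem hasDerivAt_intervalIntegral_zero_of_vanishing_on_graph {x : ℝ × ℝ → E} {φ : ℝ → ℝ} {s₀ : ℝ}
    (hφ : DifferentiableAt ℝ φ s₀) (hx : ContDiffAt ℝ 1 x (s₀, φ s₀))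
    (hzero : ∀ᶠ s in 𝓝 s₀, x (s, φ s) = 0) :
    HasDerivAt (fun s => ∫ u in φ s₀..φ s, x (s, u)) 0 s₀ := by
  obtain ⟨K, T, hT, hlip⟩ := hx.exists_lipschitzOnWith
  obtain ⟨A, hA, B, hB, hAB⟩ := mem_nhds_prod_iff.1 hT
  have hbound : ∀ᶠ s in 𝓝 s₀,
      ‖∫ u in φ s₀..φ s, x (s, u)‖ ≤ K * ‖(φ s - φ s₀) * (φ s - φ s₀)‖ := by
    filter_upwards [hzero, hA, eventually_uIcc_subset hφ.continuousAt hB] with s hs0 hsA hsB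
    have hpointwise : ∀ u ∈ Ι (φ s₀) (φ s), ‖x (s, u)‖ ≤ K * |φ s - φ s₀| := fun u hu => by
      have hu' := uIoc_subset_uIcc hu
      calc ‖x (s, u)‖ = dist (x (s, u)) (x (s, φ s)) := by rw [hs0, dist_zero_right]
        _ ≤ K * dist (s, u) (s, φ s) :=
          hlip.dist_le_mul _ (hAB ⟨hsA, hsB hu'⟩) _ (hAB ⟨hsA, hsB right_mem_uIcc⟩)
        _ ≤ K * |φ s - φ s₀| := by
          rw [dist_prod_same_left, Real.dist_eq, abs_sub_comm]
          exact mul_le_mul_of_nonneg_left (abs_sub_right_of_mem_uIcc hu') K.coe_nonneg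
    calc _ ≤ K * |φ s - φ s₀| * |φ s - φ s₀| := norm_integral_le_of_norm_le_const hpointwise
      _ = _ := by rw [Real.norm_eq_abs, abs_mul, mul_assoc]
  have hsq : (fun s => (φ s - φ s₀) * (φ s - φ s₀)) =o[𝓝 s₀] fun s => s - s₀ := by
    have hsmall : (fun s => φ s - φ s₀) =o[𝓝 s₀] fun _ => (1 : ℝ) :=
      (isLittleO_one_iff ℝ).2 (tendsto_sub_nhds_zero_iff.2 hφ.continuousAt)
    simpa using hφ.hasDerivAt.isBigO_sub.mul_isLittleO hsmall
  rw [hasDerivAt_iff_isLittleO]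
  simpa using (IsBigO.of_bound _ hbound).trans_isLittleO hsq

theorem eventually_intervalIntegral_eq_sub_add {x : ℝ × ℝ → E} {V : Set (ℝ × ℝ)}
    {ξ η : ℝ → ℝ} {s₀ : ℝ} (hV : IsOpen V) (hsub : {s₀} ×ˢ [[ξ s₀, η s₀]] ⊆ V)
    (hx : ContinuousOn x V) (hξ : ContinuousAt ξ s₀) (hη : ContinuousAt η s₀) :
    ∀ᶠ s in 𝓝 s₀, ∫ u in ξ s..η s, x (s, u) =
      (∫ u in ξ s₀..η s₀, x (s, u)) - (∫ u in ξ s₀..ξ s, x (s, u)) +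
        ∫ u in η s₀..η s, x (s, u) := by
  obtain ⟨U, W, hU, hW, hs₀U, hW', hUW⟩ :=
    generalized_tube_lemma isCompact_singleton isCompact_uIcc hV hsub
  filter_upwards [hU.mem_nhds (hs₀U rfl),
    eventually_uIcc_subset hξ (hW.mem_nhds (hW' left_mem_uIcc)),
    eventually_uIcc_subset hη (hW.mem_nhds (hW' right_mem_uIcc))] with s hs hξs hηs
  have hint : ∀ {c d}, [[c, d]] ⊆ W → IntervalIntegrable (fun u => x (s, u)) volume c d :=
    fun h => (hx.comp (Continuous.prodMk_right s).continuousOn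
      fun u hu => hUW ⟨hs, h hu⟩).intervalIntegrable
  rw [← integral_add_adjacent_intervals (hint (uIcc_comm (ξ s) _ ▸ hξs))
      ((hint hW').trans (hint hηs)),
    ← integral_add_adjacent_intervals (hint hW') (hint hηs), integral_symm (ξ s₀)]
  abel

variable [CompleteSpace E]

theorem intervalIntegrable_and_integral_eq_smul_of_eqOn_Ico {f : ℝ → E} {a b : ℝ} {c : E}
    (hab : a ≤ b) (hf : EqOn f (fun _ => c) (Ico a b)) :
    IntervalIntegrable f volume a b ∧ ∫ u in a..b, f u = (b - a) • c := by
  have hf' : EqOn f (fun _ => c) (uIoo a b) := hf.mono (uIoo_of_le hab ▸ Ioo_subset_Ico_self)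
  exact ⟨(intervalIntegrable_congr_uIoo hf').2 intervalIntegrable_const,
    by rw [integral_congr_uIoo hf', intervalIntegral.integral_const]⟩

theorem intervalIntegrable_and_integral_eq_sum_smul_of_eqOn_Ico {n : ℕ} {t : Fin (n + 1) → ℝ}
    (ht : Monotone t) {f : ℝ → E} {v : Fin n → E}
    (hf : ∀ j : Fin n, EqOn f (fun _ => v j) (Ico (t j.castSucc) (t j.succ))) :
    IntervalIntegrable f volume (t 0) (t (Fin.last n)) ∧
      ∫ u in t 0..t (Fin.last n), f u = ∑ j, (t j.succ - t j.castSucc) • v j := by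
  induction n with
  | zero => simp
  | succ n ih =>
    obtain ⟨hint, heq⟩ := ih (t := t ∘ Fin.castSucc) (v := v ∘ Fin.castSucc)
      (ht.comp Fin.strictMono_castSucc.monotone)
      (fun j => by simpa using hf j.castSucc)
    obtain ⟨hint_last, heq_last⟩ := intervalIntegrable_and_integral_eq_smul_of_eqOn_Ico
      (ht Fin.castSucc_lt_succ.le) (hf (Fin.last n))
    simp only [Function.comp_apply, Fin.castSucc_zero, Fin.succ_last] at hint heq hint_last heq_last
    refine ⟨hint.trans hint_last, ?_⟩
    rw [← integral_add_adjacent_intervals hint hint_last, heq, heq_last, Fin.sum_univ_castSucc]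
    simp

theorem stmt_12_general
    (ξ η : ℝ → ℝ) (s₀ : ℝ)
    (hξ : DifferentiableAt ℝ ξ s₀) (hη : DifferentiableAt ℝ η s₀)
    (x : ℝ × ℝ → ℝ) (V : Set (ℝ × ℝ)) (hV : IsOpen V)
    (hVmem : ({s₀} : Set ℝ) ×ˢ Set.Icc (ξ s₀) (η s₀) ⊆ V)
    (hx : ContDiffOn ℝ 1 x V)
    (hξ0 : ∀ᶠ s in nhds s₀, x (s, ξ s) = 0)
    (hη0 : ∀ᶠ s in nhds s₀, x (s, η s) = 0)
    (J : ℕ) (t : Fin (J + 2) → ℝ) (v : Fin (J + 1) → ℝ)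
    (hmono : StrictMono t)
    (ht0 : t 0 = ξ s₀) (htlast : t (Fin.last (J + 1)) = η s₀)
    (hconst : ∀ j : Fin (J + 1), ∀ u ∈ Set.Ico (t j.castSucc) (t j.succ),
      deriv (fun s => x (s, u)) s₀ = v j) :
    HasDerivAt (fun s => ∫ u in ξ s..η s, x (s, u))
      (∑ j : Fin (J + 1), v j * (t j.succ - t j.castSucc)) s₀ := by
  have hle : ξ s₀ ≤ η s₀ := by
    rw [← ht0, ← htlast]
    exact hmono.monotone (Fin.zero_le _)
  rw [← uIcc_of_le hle] at hVmem
  have hCξ : ContDiffAt ℝ 1 x (s₀, ξ s₀) :=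
    hx.contDiffAt (hV.mem_nhds (hVmem ⟨rfl, left_mem_uIcc⟩))
  have hCη : ContDiffAt ℝ 1 x (s₀, η s₀) :=
    hx.contDiffAt (hV.mem_nhds (hVmem ⟨rfl, right_mem_uIcc⟩))
  have hsum : ∫ u in ξ s₀..η s₀, deriv (fun s => x (s, u)) s₀ =
      ∑ j : Fin (J + 1), v j * (t j.succ - t j.castSucc) := by
    rw [← ht0, ← htlast,
      (intervalIntegrable_and_integral_eq_sum_smul_of_eqOn_Ico hmono.monotone hconst).2]
    simp only [smul_eq_mul, mul_comm]
  have hL := ((hasDerivAt_intervalIntegral_of_contDiffOn hV hVmem hx).sub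
    (hasDerivAt_intervalIntegral_zero_of_vanishing_on_graph hξ hCξ hξ0)).add
    (hasDerivAt_intervalIntegral_zero_of_vanishing_on_graph hη hCη hη0)
  rw [sub_zero, add_zero, hsum] at hL
  exact hL.congr_of_eventuallyEq (eventually_intervalIntegral_eq_sub_add hV hVmem
    hx.continuousOn hξ.continuousAt hη.continuousAt)

/-- IPA estimator for the cost derivative over a nonempty period (eq. (19)):
under the hypotheses of the Leibniz rule, if there is a partition
`ξ s₀ = t⁰ < t¹ < ⋯ < t^J < t^{J+1} = η s₀` on whose subintervals
`[tʲ, tʲ⁺¹)` the sensitivity `∂x/∂s (s₀, ·)` is constant equal to `vⱼ`, then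
`L (s) = ∫_{ξ s}^{η s} x (s, t) dt` is differentiable at `s₀` with
`L'(s₀) = Σⱼ vⱼ · (tʲ⁺¹ − tʲ)`. -/
theorem stmt_12
    (ξ η : ℝ → ℝ) (s₀ : ℝ)
    (hξ : DifferentiableAt ℝ ξ s₀) (hη : DifferentiableAt ℝ η s₀)
    (hlt : ξ s₀ < η s₀)
    (x : ℝ × ℝ → ℝ) (V : Set (ℝ × ℝ)) (hV : IsOpen V)
    (hVmem : ({s₀} : Set ℝ) ×ˢ Set.Icc (ξ s₀) (η s₀) ⊆ V)
    (hx : ContDiffOn ℝ 1 x V)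
    (hξ0 : ∀ᶠ s in nhds s₀, x (s, ξ s) = 0)
    (hη0 : ∀ᶠ s in nhds s₀, x (s, η s) = 0)
    (J : ℕ) (t : Fin (J + 2) → ℝ) (v : Fin (J + 1) → ℝ)
    (hmono : StrictMono t)
    (ht0 : t 0 = ξ s₀) (htlast : t (Fin.last (J + 1)) = η s₀)
    (hconst : ∀ j : Fin (J + 1), ∀ u ∈ Set.Ico (t j.castSucc) (t j.succ),
      deriv (fun s => x (s, u)) s₀ = v j) :
    HasDerivAt (fun s => ∫ u in ξ s..η s, x (s, u))
      (∑ j : Fin (J + 1), v j * (t j.succ - t j.castSucc)) s₀ :=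
  stmt_12_general ξ η s₀ hξ hη x V hV hVmem hx hξ0 hη0 J t v hmono ht0 htlast hconst
end
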